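/- arXiv:1705.02572 — 5 statements merged into one kernel-verified Lean document; each statement's English description precedes it below -/
import Mathlib

section
/- Let f : ℝ → ℝ be twice continuously differentiable on [a,b] with a < b, and let x ∈ [a,b]. Then (1/(b-a)) ∫_a^b f(t) dt − f(x) + ((2x−a−b)/2)·f'(x) = ((x−a)³/(2(b−a))) ∫_0^1 t² f''(t x + (1−t) a) dt + ((b−x)³/(2(b−a))) ∫_0^1 t² f''(t x + (1−t) b) dt. -/
/-!
For `g t = f (t x + (1 - t) c)` two integrations by parts give
`∫₀¹ t² g'' = g'(1) - 2 g(1) + 2 ∫₀¹ g`; since `g'' = (x - c)² f''(…)` and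
`(x - c) ∫₀¹ g = ∫_c^x f`, this expresses `(x - c)³/2 ∫₀¹ t² f''(t x + (1 - t) c) dt` through
`f x`, `f' x` and `∫_c^x f`. Subtracting the instances `c = a` and `c = b` gives the identity.
-/

open Set MeasureTheory

theorem integral_sq_mul_deriv_deriv {g g' g'' : ℝ → ℝ}
    (hg : ∀ t ∈ uIcc (0 : ℝ) 1, HasDerivAt g (g' t) t)
    (hg' : ∀ t ∈ uIcc (0 : ℝ) 1, HasDerivAt g' (g'' t) t)
    (hg'' : IntervalIntegrable g'' volume 0 1) :
    ∫ t in (0 : ℝ)..1, t ^ 2 * g'' t = g' 1 - 2 * g 1 + 2 * ∫ t in (0 : ℝ)..1, g t := by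
  have hg'_cont : ContinuousOn g' (uIcc 0 1) :=
    fun t ht => (hg' t ht).continuousAt.continuousWithinAt
  have hsq : ∀ t ∈ uIcc (0 : ℝ) 1, HasDerivAt (fun t => t ^ 2) (2 * t) t := fun t _ => by
    simpa using hasDerivAt_pow 2 t
  have hlin : ∀ t ∈ uIcc (0 : ℝ) 1, HasDerivAt (fun t => 2 * t) 2 t := fun t _ => by
    simpa using (hasDerivAt_id t).const_mul (2 : ℝ)
  have ibp₁ : ∫ t in (0 : ℝ)..1, t ^ 2 * g'' t = g' 1 - ∫ t in (0 : ℝ)..1, 2 * t * g' t := by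
    simpa using intervalIntegral.integral_mul_deriv_eq_deriv_mul hsq hg'
      ((continuous_const_mul 2).intervalIntegrable 0 1) hg''
  have ibp₂ : ∫ t in (0 : ℝ)..1, 2 * t * g' t = 2 * g 1 - 2 * ∫ t in (0 : ℝ)..1, g t := by
    simpa [intervalIntegral.integral_const_mul] using
      intervalIntegral.integral_mul_deriv_eq_deriv_mul hlin hg intervalIntegrable_const
        hg'_cont.intervalIntegrable
  rw [ibp₁, ibp₂]
  ring

theorem mul_add_one_sub_mul_mem_uIcc {c x t : ℝ} (ht : t ∈ uIcc (0 : ℝ) 1) :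
    t * x + (1 - t) * c ∈ uIcc c x := by
  rw [uIcc_of_le zero_le_one] at ht
  rw [← segment_eq_uIcc]
  exact ⟨1 - t, t, by linarith [ht.2], ht.1, by ring, by simp only [smul_eq_mul]; ring⟩

theorem cube_mul_integral_sq_mul_of_hasDerivAt {f f' f'' : ℝ → ℝ} {c x : ℝ}
    (hf : ∀ y ∈ uIcc c x, HasDerivAt f (f' y) y)
    (hf' : ∀ y ∈ uIcc c x, HasDerivAt f' (f'' y) y)
    (hf'' : ContinuousOn f'' (uIcc c x)) :
    (x - c) ^ 3 / 2 * ∫ t in (0 : ℝ)..1, t ^ 2 * f'' (t * x + (1 - t) * c)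
      = (x - c) ^ 2 / 2 * f' x - (x - c) * f x + ∫ y in c..x, f y := by
  set L : ℝ → ℝ := fun t => t * x + (1 - t) * c
  have hL : ∀ t, HasDerivAt L (x - c) t := fun t =>
    (((hasDerivAt_id t).mul_const x).add
      (((hasDerivAt_id t).const_sub 1).mul_const c)).congr_deriv (by ring)
  have hL_cont : ContinuousOn L (uIcc 0 1) := fun t _ => (hL t).continuousAt.continuousWithinAt
  have hg : ∀ t ∈ uIcc (0 : ℝ) 1, HasDerivAt (f ∘ L) ((x - c) * f' (L t)) t := fun t ht => by
    rw [mul_comm]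
    exact (hf _ (mul_add_one_sub_mul_mem_uIcc ht)).comp t (hL t)
  have hg' : ∀ t ∈ uIcc (0 : ℝ) 1,
      HasDerivAt (fun t => (x - c) * f' (L t)) ((x - c) ^ 2 * f'' (L t)) t := fun t ht =>
    (((hf' _ (mul_add_one_sub_mul_mem_uIcc ht)).comp t (hL t)).const_mul (x - c)).congr_deriv
      (by ring)
  have hg'' : IntervalIntegrable (fun t => (x - c) ^ 2 * f'' (L t)) volume 0 1 :=
    (continuousOn_const.mul
      (hf''.comp hL_cont fun _ ht => mul_add_one_sub_mul_mem_uIcc ht)).intervalIntegrable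
  have hibp := integral_sq_mul_deriv_deriv hg hg' hg''
  have hsubst : (x - c) * ∫ t in (0 : ℝ)..1, f (L t) = ∫ y in c..x, f y := by
    have := intervalIntegral.smul_integral_comp_mul_add (f := f) (a := 0) (b := 1) (x - c) c
    simp only [smul_eq_mul, mul_zero, zero_add, mul_one, sub_add_cancel] at this
    rw [← this]
    congr 2 with t
    exact congrArg f (by ring)
  have hpull : ∫ t in (0 : ℝ)..1, t ^ 2 * ((x - c) ^ 2 * f'' (L t))
      = (x - c) ^ 2 * ∫ t in (0 : ℝ)..1, t ^ 2 * f'' (L t) := by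
    rw [← intervalIntegral.integral_const_mul]
    congr 1 with t
    ring
  have hL1 : L 1 = x := by simp [L]
  simp only [hpull, Function.comp_apply, hL1] at hibp
  linear_combination (x - c) / 2 * hibp + hsubst

theorem ContDiffOn.cube_mul_integral_sq_mul_deriv_deriv {f : ℝ → ℝ} {U : Set ℝ} {c x : ℝ}
    (hf : ContDiffOn ℝ 2 f U) (hU : IsOpen U) (hcx : uIcc c x ⊆ U) :
    (x - c) ^ 3 / 2 * ∫ t in (0 : ℝ)..1, t ^ 2 * deriv (deriv f) (t * x + (1 - t) * c)
      = (x - c) ^ 2 / 2 * deriv f x - (x - c) * f x + ∫ y in c..x, f y := by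
  have hf' : ContDiffOn ℝ 1 (deriv f) U := hf.deriv_of_isOpen hU (by norm_num)
  exact cube_mul_integral_sq_mul_of_hasDerivAt
    (fun y hy => ((hf.contDiffAt (hU.mem_nhds (hcx hy))).hasStrictDerivAt two_ne_zero).hasDerivAt)
    (fun y hy => ((hf'.contDiffAt (hU.mem_nhds (hcx hy))).hasStrictDerivAt one_ne_zero).hasDerivAt)
    ((hf'.deriv_of_isOpen (m := 0) hU le_rfl).continuousOn.mono hcx)

theorem stmt_0 (f : ℝ → ℝ) (a b x : ℝ) (hab : a < b) (hx : x ∈ Set.Icc a b)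
    (U : Set ℝ) (hU : IsOpen U) (hsub : Set.Icc a b ⊆ U) (hf : ContDiffOn ℝ 2 f U) :
    (1/(b-a)) * (∫ t in a..b, f t) - f x + ((2*x - a - b)/2) * deriv f x
      = ((x-a)^3/(2*(b-a))) * (∫ t in (0:ℝ)..1, t^2 * deriv (deriv f) (t*x + (1-t)*a))
      + ((b-x)^3/(2*(b-a))) * (∫ t in (0:ℝ)..1, t^2 * deriv (deriv f) (t*x + (1-t)*b)) := by
  have hxa : uIcc a x ⊆ U := (uIcc_subset_Icc (left_mem_Icc.2 hab.le) hx).trans hsub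
  have hxb : uIcc b x ⊆ U := (uIcc_subset_Icc (right_mem_Icc.2 hab.le) hx).trans hsub
  have hA := hf.cube_mul_integral_sq_mul_deriv_deriv hU hxa
  have hB := hf.cube_mul_integral_sq_mul_deriv_deriv hU hxb
  have hsplit : (∫ t in a..x, f t) + (∫ t in x..b, f t) = ∫ t in a..b, f t :=
    intervalIntegral.integral_add_adjacent_intervals
      (hf.continuousOn.mono hxa).intervalIntegrable
      (hf.continuousOn.mono (uIcc_comm x b ▸ hxb)).intervalIntegrable
  rw [intervalIntegral.integral_symm x b] at hB
  have hba : b - a ≠ 0 := sub_ne_zero.2 hab.ne'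
  -- so that `field_simp` does not normalize inside the integrands
  generalize (∫ t in (0:ℝ)..1, t^2 * deriv (deriv f) (t*x + (1-t)*a)) = Ia at hA ⊢
  generalize (∫ t in (0:ℝ)..1, t^2 * deriv (deriv f) (t*x + (1-t)*b)) = Ib at hB ⊢
  field_simp
  linear_combination 2 * (hB - hA - hsplit)
end

section
/- Let s ∈ (0,1), a < b with a, b ≥ 0, and f : ℝ → ℝ twice continuously differentiable on an interval containing [a,b]. Suppose |f''| is s-convex in the second sense on [a,b], i.e. |f''(λu + (1−λ)v)| ≤ λ^s |f''(u)| + (1−λ)^s |f''(v)| for all u,v ∈ [a,b] and λ ∈ [0,1]. Set M(s) = 1/(s+3) and N(s) = 1/(s+1) − 2/(s+2) + 1/(s+3). Then for all x ∈ [a,b]: |(1/(b−a)) ∫_a^b f(t) dt − f(x) + ((2x−a−b)/2) f'(x)| ≤ ((x−a)³/(2(b−a)))·(M(s)|f''(x)| + N(s)|f''(a)|) + ((b−x)³/(2(b−a)))·(M(s)|f''(x)| + N(s)|f''(b)|). -/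
/-!
Two integrations by parts, against the kernels `(t - a)²` on `[a, x]` and `(t - b)²` on `[b, x]`,
express the Ostrowski functional through `f''`. Substituting `t = λx + (1 - λ)a`, resp.
`t = λx + (1 - λ)b`, evaluates `f''` at convex combinations of `x` and an endpoint, where the
s-convexity of `|f''|` applies; the resulting weights integrate to `∫₀¹ λ^(s+2) = 1/(s+3)` and
`∫₀¹ λ²(1-λ)^s = 1/(s+1) - 2/(s+2) + 1/(s+3)`.
-/

open Set intervalIntegral MeasureTheory

theorem integral_rpow_zero_one {r : ℝ} (hr : -1 < r) : ∫ l in (0:ℝ)..1, l ^ r = 1 / (r + 1) := by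
  rw [integral_rpow (Or.inl hr), Real.one_rpow, Real.zero_rpow (by linarith), sub_zero]

theorem rpow_add_two {x s : ℝ} (hx : 0 ≤ x) (hs : s + 2 ≠ 0) : x ^ (s + 2) = x ^ s * x ^ 2 := by
  rw [Real.rpow_add' hx hs, Real.rpow_two]

theorem integral_sq_mul_rpow {s : ℝ} (hs : -1 < s) :
    ∫ l in (0:ℝ)..1, l ^ 2 * l ^ s = 1 / (s + 3) := by
  have h : EqOn (fun l : ℝ => l ^ 2 * l ^ s) (fun l => l ^ (s + 2)) (uIcc 0 1) := fun l hl => by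
    simp only [rpow_add_two (s := s) (by simp_all : 0 ≤ l) (by linarith), mul_comm]
  rw [integral_congr h, integral_rpow_zero_one (by linarith)]
  ring_nf

theorem integral_sq_mul_one_sub_rpow {s : ℝ} (hs : -1 < s) :
    ∫ l in (0:ℝ)..1, l ^ 2 * (1 - l) ^ s = 1 / (s + 1) - 2 / (s + 2) + 1 / (s + 3) := by
  have h : EqOn (fun l : ℝ => (1 - l) ^ 2 * l ^ s)
      (fun l => l ^ s - 2 * l ^ (s + 1) + l ^ (s + 2)) (uIcc 0 1) := fun l hl => by
    have hl0 : 0 ≤ l := by simp_all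
    simp only [rpow_add_two (s := s) hl0 (by linarith), Real.rpow_add_one' hl0 (by linarith : s + 1 ≠ 0)]
    ring
  have hsub := integral_comp_sub_left (fun l : ℝ => (1 - l) ^ 2 * l ^ s) (a := 0) (b := 1) 1
  simp only [sub_sub_cancel, sub_zero, sub_self] at hsub
  have h0 := intervalIntegrable_rpow' (a := 0) (b := 1) hs
  have h1 := intervalIntegrable_rpow' (a := 0) (b := 1) (r := s + 1) (by linarith)
  have h2 := intervalIntegrable_rpow' (a := 0) (b := 1) (r := s + 2) (by linarith)
  rw [hsub, integral_congr h, intervalIntegral.integral_add (h0.sub (h1.const_mul 2)) h2,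
    intervalIntegral.integral_sub h0 (h1.const_mul 2), intervalIntegral.integral_const_mul,
    integral_rpow_zero_one hs,
    integral_rpow_zero_one (by linarith), integral_rpow_zero_one (by linarith)]
  ring_nf

theorem abs_integral_sq_mul_le {s A B : ℝ} (hs : -1 < s) {h : ℝ → ℝ}
    (hh : IntervalIntegrable h volume 0 1)
    (hbound : ∀ l ∈ Icc (0:ℝ) 1, |h l| ≤ l ^ s * A + (1 - l) ^ s * B) :
    |∫ l in (0:ℝ)..1, l ^ 2 * h l| ≤
      1 / (s + 3) * A + (1 / (s + 1) - 2 / (s + 2) + 1 / (s + 3)) * B := by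
  have hsq : ContinuousOn (fun l : ℝ => l ^ 2) (uIcc 0 1) := (continuous_pow 2).continuousOn
  have hA : IntervalIntegrable (fun l : ℝ => l ^ 2 * l ^ s) volume 0 1 :=
    (intervalIntegrable_rpow' hs).continuousOn_mul hsq
  have hB : IntervalIntegrable (fun l : ℝ => l ^ 2 * (1 - l) ^ s) volume 0 1 := by
    have := ((intervalIntegrable_rpow' (a := 0) (b := 1) hs).comp_sub_left 1).symm
    rw [sub_zero, sub_self] at this
    exact this.continuousOn_mul hsq
  calc |∫ l in (0:ℝ)..1, l ^ 2 * h l|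
      ≤ ∫ l in (0:ℝ)..1, |l ^ 2 * h l| := abs_integral_le_integral_abs zero_le_one
    _ ≤ ∫ l in (0:ℝ)..1, (l ^ 2 * l ^ s * A + l ^ 2 * (1 - l) ^ s * B) := by
        refine integral_mono_on zero_le_one (hh.continuousOn_mul hsq).abs
          ((hA.mul_const A).add (hB.mul_const B)) fun l hl => ?_
        rw [abs_mul, abs_sq]
        nlinarith [hbound l hl, sq_nonneg l]
    _ = _ := by
        rw [intervalIntegral.integral_add (hA.mul_const A) (hB.mul_const B),
          intervalIntegral.integral_mul_const, intervalIntegral.integral_mul_const,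
          integral_sq_mul_rpow hs, integral_sq_mul_one_sub_rpow hs]

theorem integral_sub_sq_mul_eq (g : ℝ → ℝ) (p q : ℝ) :
    ∫ t in q..p, (t - q) ^ 2 * g t =
      (p - q) ^ 3 * ∫ l in (0:ℝ)..1, l ^ 2 * g (l * p + (1 - l) * q) := by
  have h := smul_integral_comp_mul_add (a := 0) (b := 1) (fun t => (t - q) ^ 2 * g t) (p - q) q
  simp only [mul_zero, zero_add, mul_one, sub_add_cancel, smul_eq_mul] at h
  rw [← h, ← intervalIntegral.integral_const_mul, ← intervalIntegral.integral_const_mul]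
  refine intervalIntegral.integral_congr fun l _ => ?_
  ring_nf

theorem integral_sub_sq_mul_second_deriv {f f' f'' : ℝ → ℝ} {q p : ℝ}
    (hf : ∀ t ∈ uIcc q p, HasDerivAt f (f' t) t) (hf' : ∀ t ∈ uIcc q p, HasDerivAt f' (f'' t) t)
    (hf'' : IntervalIntegrable f'' volume q p) :
    ∫ t in q..p, (t - q) ^ 2 * f'' t = (p - q) ^ 2 * f' p - 2 * ((p - q) * f p) +
      2 * ∫ t in q..p, f t := by
  have hcont : ContinuousOn f' (uIcc q p) := fun t ht => (hf' t ht).continuousAt.continuousWithinAt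
  have hsq : ∀ t ∈ uIcc q p, HasDerivAt (fun t => (t - q) ^ 2) (2 * (t - q)) t := fun t _ => by
    simpa using ((hasDerivAt_id t).sub_const q).fun_pow 2
  have hlin : ∀ t ∈ uIcc q p, HasDerivAt (fun t => 2 * (t - q)) 2 t := fun t _ => by
    simpa using ((hasDerivAt_id t).sub_const q).const_mul 2
  rw [integral_mul_deriv_eq_deriv_mul hsq hf' (Continuous.intervalIntegrable (by fun_prop) _ _)
      hf'',
    integral_mul_deriv_eq_deriv_mul hlin hf intervalIntegrable_const hcont.intervalIntegrable,
    intervalIntegral.integral_const_mul]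
  ring

theorem ostrowski_identity {f f' f'' : ℝ → ℝ} {a b x : ℝ} (hab : a < b) (hx : x ∈ Icc a b)
    (hf : ∀ t ∈ Icc a b, HasDerivAt f (f' t) t) (hf' : ∀ t ∈ Icc a b, HasDerivAt f' (f'' t) t)
    (hf'' : IntervalIntegrable f'' volume a b) :
    1 / (b - a) * (∫ t in a..b, f t) - f x + (2 * x - a - b) / 2 * f' x =
      (x - a) ^ 3 / (2 * (b - a)) * (∫ l in (0:ℝ)..1, l ^ 2 * f'' (l * x + (1 - l) * a)) +
      (b - x) ^ 3 / (2 * (b - a)) * ∫ l in (0:ℝ)..1, l ^ 2 * f'' (l * x + (1 - l) * b) := by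
  have hax : uIcc a x ⊆ Icc a b := by
    rw [uIcc_of_le hx.1]; exact Icc_subset_Icc le_rfl hx.2
  have hbx : uIcc b x ⊆ Icc a b := by
    rw [uIcc_of_ge hx.2]; exact Icc_subset_Icc hx.1 le_rfl
  have hab' : uIcc a b = Icc a b := uIcc_of_le hab.le
  have hfc : ContinuousOn f (Icc a b) := fun t ht => (hf t ht).continuousAt.continuousWithinAt
  have ha := integral_sub_sq_mul_second_deriv (fun t ht => hf t (hax ht))
    (fun t ht => hf' t (hax ht)) (hf''.mono_set (hab' ▸ hax))
  have hb := integral_sub_sq_mul_second_deriv (fun t ht => hf t (hbx ht))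
    (fun t ht => hf' t (hbx ht)) (hf''.mono_set (hab' ▸ hbx))
  rw [integral_sub_sq_mul_eq] at ha hb
  have hsplit := intervalIntegral.integral_add_adjacent_intervals
    ((hfc.mono hax).intervalIntegrable (μ := volume))
    ((hfc.mono (uIcc_comm b x ▸ hbx)).intervalIntegrable (μ := volume))
  rw [intervalIntegral.integral_symm x b] at hb
  rw [← hsplit]
  generalize (∫ l in (0:ℝ)..1, l ^ 2 * f'' (l * x + (1 - l) * a)) = Ka at ha ⊢
  generalize (∫ l in (0:ℝ)..1, l ^ 2 * f'' (l * x + (1 - l) * b)) = Kb at hb ⊢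
  have hba : b - a ≠ 0 := (sub_pos.2 hab).ne'
  field_simp
  linear_combination hb - ha

theorem ContinuousOn.intervalIntegrable_comp_segment {g : ℝ → ℝ} {a b u v : ℝ}
    (hg : ContinuousOn g (Icc a b)) (hu : u ∈ Icc a b) (hv : v ∈ Icc a b) :
    IntervalIntegrable (fun l => g (l * u + (1 - l) * v)) volume 0 1 := by
  refine ContinuousOn.intervalIntegrable (hg.comp (by fun_prop) fun l hl => ?_)
  rw [uIcc_of_le zero_le_one] at hl
  exact convex_Icc a b hu hv hl.1 (sub_nonneg.2 hl.2) (add_sub_cancel l 1)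

theorem stmt_3_general (f : ℝ → ℝ) (a b : ℝ) (s : ℝ) (hs : s ∈ Set.Ioo (0:ℝ) 1)
    (hab : a < b)
    (U : Set ℝ) (hU : IsOpen U) (hsub : Set.Icc a b ⊆ U) (hf : ContDiffOn ℝ 2 f U)
    (hsc : ∀ u ∈ Set.Icc a b, ∀ v ∈ Set.Icc a b, ∀ l ∈ Set.Icc (0:ℝ) 1,
      |deriv (deriv f) (l*u + (1-l)*v)| ≤
        l ^ s * |deriv (deriv f) u| + (1-l) ^ s * |deriv (deriv f) v|) :
    ∀ x ∈ Set.Icc a b,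
      |(1/(b-a)) * (∫ t in a..b, f t) - f x + ((2*x - a - b)/2) * deriv f x|
        ≤ ((x-a)^3/(2*(b-a))) *
            ((1/(s+3)) * |deriv (deriv f) x| + (1/(s+1) - 2/(s+2) + 1/(s+3)) * |deriv (deriv f) a|)
        + ((b-x)^3/(2*(b-a))) *
            ((1/(s+3)) * |deriv (deriv f) x| + (1/(s+1) - 2/(s+2) + 1/(s+3)) * |deriv (deriv f) b|) := by
  intro x hx
  have hf' : ContDiffOn ℝ 1 (deriv f) U := hf.deriv_of_isOpen hU (by norm_num)
  have hD : ContinuousOn (deriv (deriv f)) (Icc a b) :=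
    ((hf'.deriv_of_isOpen (m := 0) hU (by norm_num)).continuousOn).mono hsub
  have hderiv {g : ℝ → ℝ} (hg : ContDiffOn ℝ 1 g U) (t : ℝ) (ht : t ∈ Icc a b) :
      HasDerivAt g (deriv g t) t :=
    ((hg.differentiableOn one_ne_zero).differentiableAt (hU.mem_nhds (hsub ht))).hasDerivAt
  have ha : a ∈ Icc a b := left_mem_Icc.2 hab.le
  have hb : b ∈ Icc a b := right_mem_Icc.2 hab.le
  have hs' : -1 < s := by linarith [hs.1]
  rw [ostrowski_identity hab hx (hderiv (hf.of_le (by norm_num))) (hderiv hf')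
    (hD.intervalIntegrable_of_Icc hab.le)]
  have hcoef {p q : ℝ} (hpq : p ≤ q) : 0 ≤ (q - p) ^ 3 / (2 * (b - a)) :=
    div_nonneg (pow_nonneg (sub_nonneg.2 hpq) 3) (by linarith)
  have hbound {v : ℝ} (hv : v ∈ Icc a b) := abs_integral_sq_mul_le hs'
    (hD.intervalIntegrable_comp_segment hx hv) (hsc x hx v hv)
  refine (abs_add_le _ _).trans ?_
  rw [abs_mul, abs_mul, abs_of_nonneg (hcoef hx.1), abs_of_nonneg (hcoef hx.2)]
  gcongr
  exacts [hcoef hx.1, hbound ha, hcoef hx.2, hbound hb]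

theorem stmt_3 (f : ℝ → ℝ) (a b : ℝ) (s : ℝ) (hs : s ∈ Set.Ioo (0:ℝ) 1)
    (ha : 0 ≤ a) (hb : 0 ≤ b) (hab : a < b)
    (U : Set ℝ) (hU : IsOpen U) (hsub : Set.Icc a b ⊆ U) (hf : ContDiffOn ℝ 2 f U)
    (hsc : ∀ u ∈ Set.Icc a b, ∀ v ∈ Set.Icc a b, ∀ l ∈ Set.Icc (0:ℝ) 1,
      |deriv (deriv f) (l*u + (1-l)*v)| ≤
        l ^ s * |deriv (deriv f) u| + (1-l) ^ s * |deriv (deriv f) v|) :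
    ∀ x ∈ Set.Icc a b,
      |(1/(b-a)) * (∫ t in a..b, f t) - f x + ((2*x - a - b)/2) * deriv f x|
        ≤ ((x-a)^3/(2*(b-a))) *
            ((1/(s+3)) * |deriv (deriv f) x| + (1/(s+1) - 2/(s+2) + 1/(s+3)) * |deriv (deriv f) a|)
        + ((b-x)^3/(2*(b-a))) *
            ((1/(s+3)) * |deriv (deriv f) x| + (1/(s+1) - 2/(s+2) + 1/(s+3)) * |deriv (deriv f) b|) :=
  stmt_3_general f a b s hs hab U hU hsub hf hsc
end

section
/- Let s ∈ (0,1), a < b with a, b ≥ 0, and f : ℝ → ℝ twice continuously differentiable on an interval containing [a,b] with |f''| s-convex in the second sense on [a,b]. Set M(s) = 1/(s+3), N(s) = 1/(s+1) − 2/(s+2) + 1/(s+3), and Θ = sup_{x ∈ [a,b]} |f''(x)|. Then for all x ∈ [a,b]: |(1/(b−a)) ∫_a^b f(t) dt − f(x) + ((2x−a−b)/2) f'(x)| ≤ (3/2)·Θ·(M(s)+N(s))·[ (b−a)²/12 + (x − (a+b)/2)² ]. -/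
open intervalIntegral

set_option maxHeartbeats 1000000 in
theorem stmt_4 (f : ℝ → ℝ) (a b : ℝ) (s : ℝ) (hs : s ∈ Set.Ioo (0:ℝ) 1)
    (ha : 0 ≤ a) (hb : 0 ≤ b) (hab : a < b)
    (U : Set ℝ) (hU : IsOpen U) (hsub : Set.Icc a b ⊆ U) (hf : ContDiffOn ℝ 2 f U)
    (hsc : ∀ u ∈ Set.Icc a b, ∀ v ∈ Set.Icc a b, ∀ l ∈ Set.Icc (0:ℝ) 1,
      |deriv (deriv f) (l*u + (1-l)*v)| ≤
        l ^ s * |deriv (deriv f) u| + (1-l) ^ s * |deriv (deriv f) v|)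
    (Θ : ℝ) (hΘ : Θ = sSup ((fun t => |deriv (deriv f) t|) '' Set.Icc a b)) :
    ∀ x ∈ Set.Icc a b,
      |(1/(b-a)) * (∫ t in a..b, f t) - f x + ((2*x - a - b)/2) * deriv f x|
        ≤ (3/2) * Θ * ((1/(s+3)) + (1/(s+1) - 2/(s+2) + 1/(s+3)))
            * ((b-a)^2/12 + (x - (a+b)/2)^2) := by
  intro x hx
  obtain ⟨hs0, hs1⟩ := hs
  set g := deriv f with hg
  set g' := deriv (deriv f) with hg'
  -- basic regularity facts
  have hg1 : ContDiffOn ℝ 1 g U := hf.deriv_of_isOpen hU (by norm_num)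
  have hgc : ContinuousOn g U := hg1.continuousOn
  have hg'c : ContinuousOn g' U := hg1.continuousOn_deriv_of_isOpen hU le_rfl
  have hfd : ∀ t ∈ U, HasDerivAt f (g t) t := by
    intro t ht
    exact ((hf.differentiableOn (by norm_num) t ht).differentiableAt
      (hU.mem_nhds ht)).hasDerivAt
  have hgd : ∀ t ∈ U, HasDerivAt g (g' t) t := by
    intro t ht
    exact ((hg1.differentiableOn (by norm_num) t ht).differentiableAt
      (hU.mem_nhds ht)).hasDerivAt
  -- Θ bounds |g'| on [a,b]
  have hcomp : IsCompact ((fun t => |g' t|) '' Set.Icc a b) :=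
    isCompact_Icc.image_of_continuousOn ((hg'c.mono hsub).abs)
  have hΘle : ∀ t ∈ Set.Icc a b, |g' t| ≤ Θ := by
    intro t ht
    rw [hΘ]
    exact le_csSup hcomp.bddAbove ⟨t, ht, rfl⟩
  have hΘ0 : 0 ≤ Θ := le_trans (abs_nonneg _) (hΘle a (Set.left_mem_Icc.2 hab.le))
  -- Lipschitz bound for g on [a,b]
  have hlip : ∀ u ∈ Set.Icc a b, ∀ t ∈ Set.Icc a b, |g t - g u| ≤ Θ * |t - u| := by
    intro u hu t ht
    have := (convex_Icc a b).norm_image_sub_le_of_norm_hasDerivWithin_le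
      (f' := g') (fun y hy => (hgd y (hsub hy)).hasDerivWithinAt)
      (fun y hy => by simpa [Real.norm_eq_abs] using hΘle y hy) hu ht
    simpa [Real.norm_eq_abs] using this
  -- pointwise Taylor bound
  have hptw : ∀ t ∈ Set.Icc a b, |f t - f x - g x * (t - x)| ≤ Θ / 2 * (t - x) ^ 2 := by
    intro t ht
    have hsubx : Set.uIcc x t ⊆ Set.Icc a b := Set.uIcc_subset_Icc hx ht
    have key : f t - f x - g x * (t - x) = ∫ u in x..t, (g u - g x) := by
      have h1 : ∀ u ∈ Set.uIcc x t, HasDerivAt (fun y => f y - g x * y) (g u - g x) u := by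
        intro u hu
        exact (hfd u (hsub (hsubx hu))).sub (by simpa using (hasDerivAt_id u).const_mul (g x))
      have h2 : IntervalIntegrable (fun u => g u - g x) MeasureTheory.volume x t :=
        (((hgc.mono hsub).mono hsubx).sub continuousOn_const).intervalIntegrable
      have := integral_eq_sub_of_hasDerivAt h1 h2
      rw [this]; ring
    rw [key]
    rcases le_total x t with hxt | hxt
    · have hb1 : IntervalIntegrable (fun u => |g u - g x|) MeasureTheory.volume x t :=
        ((((hgc.mono hsub).mono hsubx).sub continuousOn_const).abs).intervalIntegrable
      have hb2 : IntervalIntegrable (fun u => Θ * (u - x)) MeasureTheory.volume x t :=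
        (Continuous.intervalIntegrable (by fun_prop) _ _)
      calc |∫ u in x..t, (g u - g x)| ≤ ∫ u in x..t, |g u - g x| := by
            simpa [Real.norm_eq_abs] using
              norm_integral_le_integral_norm (f := fun u => g u - g x) hxt
        _ ≤ ∫ u in x..t, Θ * (u - x) := by
            apply integral_mono_on hxt hb1 hb2
            intro u hu
            have hu' : u ∈ Set.Icc a b := hsubx (by rw [Set.uIcc_of_le hxt]; exact hu)
            calc |g u - g x| ≤ Θ * |u - x| := hlip x hx u hu'
              _ = Θ * (u - x) := by rw [abs_of_nonneg (by linarith [hu.1])]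
        _ = Θ / 2 * (t - x) ^ 2 := by
            rw [integral_const_mul]
            rw [integral_sub intervalIntegrable_id
              (intervalIntegrable_const)]
            simp [integral_id]
            ring
    · have hb1 : IntervalIntegrable (fun u => |g u - g x|) MeasureTheory.volume t x :=
        ((((hgc.mono hsub).mono (by rwa [Set.uIcc_comm] at hsubx)).sub
          continuousOn_const).abs).intervalIntegrable
      have hb2 : IntervalIntegrable (fun u => Θ * (x - u)) MeasureTheory.volume t x :=
        (Continuous.intervalIntegrable (by fun_prop) _ _)
      have hswap : |∫ u in x..t, (g u - g x)| = |∫ u in t..x, (g u - g x)| := by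
        rw [integral_symm, abs_neg]
      rw [hswap]
      calc |∫ u in t..x, (g u - g x)| ≤ ∫ u in t..x, |g u - g x| := by
            simpa [Real.norm_eq_abs] using
              norm_integral_le_integral_norm (f := fun u => g u - g x) hxt
        _ ≤ ∫ u in t..x, Θ * (x - u) := by
            apply integral_mono_on hxt hb1 hb2
            intro u hu
            have hu' : u ∈ Set.Icc a b := hsubx (by rw [Set.uIcc_comm, Set.uIcc_of_le hxt]; exact hu)
            calc |g u - g x| ≤ Θ * |u - x| := hlip x hx u hu'
              _ = Θ * (x - u) := by rw [abs_of_nonpos (by linarith [hu.2])]; ring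
        _ = Θ / 2 * (t - x) ^ 2 := by
            rw [integral_const_mul]
            rw [integral_sub intervalIntegrable_const intervalIntegrable_id]
            simp [integral_id]
            ring
  -- integral of the remainder
  have hfint : IntervalIntegrable f MeasureTheory.volume a b :=
    (((hf.continuousOn).mono hsub).mono (by rw [Set.uIcc_of_le hab.le])).intervalIntegrable
  have hφint : IntervalIntegrable (fun t => f t - f x - g x * (t - x))
      MeasureTheory.volume a b := by
    apply ContinuousOn.intervalIntegrable
    apply ContinuousOn.sub (ContinuousOn.sub ((hf.continuousOn.mono hsub).mono
      (by rw [Set.uIcc_of_le hab.le])) continuousOn_const)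
    exact (continuousOn_const.mul ((continuousOn_id.sub continuousOn_const)))
  have hEq : ∫ t in a..b, (f t - f x - g x * (t - x)) =
      (∫ t in a..b, f t) - (b - a) * f x - g x * ((b^2 - a^2)/2 - x * (b - a)) := by
    have h1 : IntervalIntegrable (fun t : ℝ => f x + g x * (t - x))
        MeasureTheory.volume a b := (Continuous.intervalIntegrable (by fun_prop) _ _)
    have : ∫ t in a..b, (f t - f x - g x * (t - x)) =
        (∫ t in a..b, f t) - ∫ t in a..b, (f x + g x * (t - x)) := by
      rw [← integral_sub hfint h1]
      congr 1; ext t; ring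
    rw [this]
    have h2 : ∫ t in a..b, (f x + g x * (t - x)) =
        (b - a) * f x + g x * ((b^2 - a^2)/2 - x * (b - a)) := by
      have e1 : ∀ t : ℝ, f x + g x * (t - x) = g x * t + (f x - g x * x) := fun t => by ring
      simp only [e1]
      rw [integral_add ((intervalIntegrable_id).const_mul _) intervalIntegrable_const,
        integral_const_mul, integral_id, integral_const]
      simp [smul_eq_mul]
      ring
    rw [h2]; ring
  -- bound on the integral of the remainder
  have hquad : IntervalIntegrable (fun t : ℝ => Θ / 2 * (t - x) ^ 2)
      MeasureTheory.volume a b := (Continuous.intervalIntegrable (by fun_prop) _ _)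
  have hqval : ∫ t in a..b, Θ / 2 * (t - x) ^ 2 =
      Θ / 2 * (((b - x) ^ 3 - (a - x) ^ 3) / 3) := by
    rw [integral_const_mul]
    congr 1
    have : ∀ t : ℝ, (t - x) ^ 2 = t ^ 2 - (2 * x) * t + x ^ 2 := by intro t; ring
    simp only [this]
    rw [integral_add (by
        apply IntervalIntegrable.sub
        · exact (Continuous.intervalIntegrable (by fun_prop) _ _)
        · exact (Continuous.intervalIntegrable (by fun_prop) _ _))
      intervalIntegrable_const]
    rw [integral_sub (Continuous.intervalIntegrable (by fun_prop) _ _)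
      (Continuous.intervalIntegrable (by fun_prop) _ _)]
    rw [integral_const_mul]
    simp [integral_pow, integral_id]
    ring
  have hIb : |∫ t in a..b, (f t - f x - g x * (t - x))| ≤
      Θ / 2 * (((b - x) ^ 3 - (a - x) ^ 3) / 3) := by
    rw [← hqval]
    calc |∫ t in a..b, (f t - f x - g x * (t - x))|
        ≤ ∫ t in a..b, |f t - f x - g x * (t - x)| := by
          simpa [Real.norm_eq_abs] using
            norm_integral_le_integral_norm
              (f := fun t => f t - f x - g x * (t - x)) hab.le
      _ ≤ ∫ t in a..b, Θ / 2 * (t - x) ^ 2 := by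
          apply integral_mono_on hab.le
            (hφint.abs) hquad
          intro t ht
          exact hptw t ht
  -- rewrite the target expression
  have hba : b - a ≠ 0 := by linarith
  have hexpr : (1/(b-a)) * (∫ t in a..b, f t) - f x + ((2*x - a - b)/2) * g x =
      (1/(b-a)) * ∫ t in a..b, (f t - f x - g x * (t - x)) := by
    rw [hEq]
    field_simp
    ring
  rw [hexpr]
  rw [abs_mul]
  have hba' : |1/(b-a)| = 1/(b-a) := abs_of_pos (one_div_pos.2 (by linarith))
  rw [hba']
  -- final numeric estimate
  have hMN : 1/3 ≤ (1/(s+1) - 2/(s+2) + 2/(s+3)) := by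
    have h1 : (0:ℝ) < s + 1 := by linarith
    have h2 : (0:ℝ) < s + 2 := by linarith
    have h3 : (0:ℝ) < s + 3 := by linarith
    rw [← sub_nonneg]
    have key : (1/(s+1) - 2/(s+2) + 2/(s+3)) - 1/3 =
        ((1 - s) * (s^2 + 4*s + 6)) / (3 * ((s+1) * (s+2) * (s+3))) := by
      field_simp
      ring
    rw [key]
    apply div_nonneg
    · nlinarith
    · positivity
  have hC : 0 ≤ (b-a)^2/12 + (x-(a+b)/2)^2 := by positivity
  have hid : ((b - x) ^ 3 - (a - x) ^ 3)/3 = (b-a) * ((b-a)^2/12 + (x-(a+b)/2)^2) := by ring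
  calc 1/(b-a) * |∫ t in a..b, (f t - f x - g x * (t - x))|
      ≤ 1/(b-a) * (Θ / 2 * (((b - x) ^ 3 - (a - x) ^ 3) / 3)) := by
        apply mul_le_mul_of_nonneg_left hIb (le_of_lt (one_div_pos.2 (by linarith)))
    _ = Θ/2 * ((b-a)^2/12 + (x-(a+b)/2)^2) := by
        rw [hid]; field_simp
    _ ≤ (3/2) * Θ * ((1/(s+3)) + (1/(s+1) - 2/(s+2) + 1/(s+3)))
            * ((b-a)^2/12 + (x - (a+b)/2)^2) := by
        have hTC : 0 ≤ Θ * ((b-a)^2/12 + (x-(a+b)/2)^2) := mul_nonneg hΘ0 hC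
        have h12 : (1:ℝ)/2 ≤ 3/2 * (1/(s+1) - 2/(s+2) + 2/(s+3)) := by linarith
        calc Θ/2 * ((b-a)^2/12 + (x-(a+b)/2)^2)
            = 1/2 * (Θ * ((b-a)^2/12 + (x-(a+b)/2)^2)) := by ring
          _ ≤ 3/2 * (1/(s+1) - 2/(s+2) + 2/(s+3)) *
              (Θ * ((b-a)^2/12 + (x-(a+b)/2)^2)) :=
            mul_le_mul_of_nonneg_right h12 hTC
          _ = (3/2) * Θ * ((1/(s+3)) + (1/(s+1) - 2/(s+2) + 1/(s+3)))
              * ((b-a)^2/12 + (x - (a+b)/2)^2) := by ring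
end

section
/- Let s ∈ (0,1], a, b ∈ [0,∞) with a < b, and let f : [0,∞) → ℝ be continuous and s-convex in the second sense. Then 2^{s−1} f((a+b)/2) ≤ (1/(b−a)) ∫_a^b f(t) dt ≤ (f(a)+f(b))/(s+1). -/
open intervalIntegral MeasureTheory

theorem stmt_11 (f : ℝ → ℝ) (s a b : ℝ) (hs : s ∈ Set.Ioc (0:ℝ) 1)
    (ha : 0 ≤ a) (hb : 0 ≤ b) (hab : a < b)
    (hcont : ContinuousOn f (Set.Ici 0))
    (hsc : ∀ u ∈ Set.Ici (0:ℝ), ∀ v ∈ Set.Ici (0:ℝ), ∀ l ∈ Set.Icc (0:ℝ) 1,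
      f (l*u + (1-l)*v) ≤ l ^ s * f u + (1-l) ^ s * f v) :
    (2:ℝ) ^ (s-1) * f ((a+b)/2) ≤ (1/(b-a)) * (∫ t in a..b, f t) ∧
    (1/(b-a)) * (∫ t in a..b, f t) ≤ (f a + f b) / (s+1) := by
  obtain ⟨hs0, hs1⟩ := hs
  have hba : (0:ℝ) < b - a := by linarith
  set I := ∫ t in a..b, f t with hIdef
  -- continuity of rpow s
  have hrpow : Continuous fun x : ℝ => x ^ s := by
    rw [continuous_iff_continuousAt]
    intro x
    exact Real.continuousAt_rpow_const x s (Or.inr hs0.le)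
  -- composition with affine maps is integrable on [0,1]
  have haff : ∀ c d : ℝ, c + d ∈ Set.Ici (0:ℝ) → d ∈ Set.Ici (0:ℝ) →
      IntervalIntegrable (fun l => f (c * l + d)) volume 0 1 := by
    intro c d hcd hd
    apply ContinuousOn.intervalIntegrable
    apply hcont.comp (by fun_prop : Continuous fun l : ℝ => c * l + d).continuousOn
    intro l hl
    rw [Set.uIcc_of_le (by norm_num : (0:ℝ) ≤ 1)] at hl
    obtain ⟨hl0, hl1⟩ := hl
    simp only [Set.mem_Ici] at hcd hd ⊢
    nlinarith
  have hIab : ∀ x ∈ Set.Icc a b, (0:ℝ) ≤ x := fun x hx => le_trans ha hx.1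
  -- change of variables lemmas
  have key : ∀ c d : ℝ, c ≠ 0 → ∫ l in (0:ℝ)..1, f (c * l + d) = c⁻¹ * ∫ x in d..(c + d), f x := by
    intro c d hc
    rw [integral_comp_mul_add f hc d]
    norm_num
  have h1 : ∫ l in (0:ℝ)..1, f ((b - a) * l + a) = (b - a)⁻¹ * I := by
    rw [key _ _ hba.ne']
    congr 2
    ring
  have h2 : ∫ l in (0:ℝ)..1, f ((a - b) * l + b) = (b - a)⁻¹ * I := by
    rw [key _ _ (by linarith : a - b ≠ 0)]
    rw [show a - b + b = a by ring, intervalIntegral.integral_symm]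
    rw [show (a - b)⁻¹ = -(b-a)⁻¹ by rw [show a - b = -(b-a) by ring, inv_neg]]
    ring
  have hint1 : IntervalIntegrable (fun l => f ((b - a) * l + a)) volume 0 1 :=
    haff _ _ (by simp only [Set.mem_Ici]; linarith) ha
  have hint2 : IntervalIntegrable (fun l => f ((a - b) * l + b)) volume 0 1 :=
    haff _ _ (by simp only [Set.mem_Ici]; linarith) hb
  have hintr : IntervalIntegrable (fun l : ℝ => l ^ s * f b + (1 - l) ^ s * f a) volume 0 1 := by
    apply ContinuousOn.intervalIntegrable
    apply Continuous.continuousOn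
    fun_prop
  have hmem : ∀ l ∈ Set.Icc (0:ℝ) 1, ∀ c d : ℝ, 0 ≤ c → 0 ≤ d → (0:ℝ) ≤ (c - d) * l + d := by
    intro l hl c d hc hd
    nlinarith [hl.1, hl.2]
  constructor
  · -- left inequality
    have hmono : f ((a + b) / 2) ≤ ∫ l in (0:ℝ)..1,
        ((1/2:ℝ) ^ s * f ((b - a) * l + a) + (1/2:ℝ) ^ s * f ((a - b) * l + b)) := by
      calc f ((a + b) / 2) = ∫ _ in (0:ℝ)..1, f ((a + b) / 2) := by simp
        _ ≤ _ := by
          apply integral_mono_on (by norm_num)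
            (intervalIntegrable_const)
            (((hint1.const_mul _).add (hint2.const_mul _)))
          intro l hl
          have hx : (b - a) * l + a ∈ Set.Ici (0:ℝ) := hmem l hl b a hb ha
          have hy : (a - b) * l + b ∈ Set.Ici (0:ℝ) := hmem l hl a b ha hb
          have := hsc _ hx _ hy (1/2) (by norm_num)
          have heq : (1/2:ℝ) * ((b - a) * l + a) + (1 - 1/2) * ((a - b) * l + b)
              = (a + b) / 2 := by ring
          rw [heq] at this
          calc f ((a+b)/2) ≤ (1/2:ℝ)^s * f ((b-a)*l+a) + (1-1/2:ℝ)^s * f ((a-b)*l+b) := this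
            _ = _ := by norm_num
    rw [intervalIntegral.integral_add (hint1.const_mul _) (hint2.const_mul _),
        intervalIntegral.integral_const_mul, intervalIntegral.integral_const_mul,
        h1, h2] at hmono
    have h2s : (0:ℝ) < (2:ℝ) ^ (s - 1) := Real.rpow_pos_of_pos (by norm_num) _
    have hhalf : (1/2:ℝ) ^ s = ((2:ℝ) ^ s)⁻¹ := by
      rw [one_div, Real.inv_rpow (by norm_num : (0:ℝ) ≤ 2)]
    have e1 : (2:ℝ) ^ (s - 1) * (2:ℝ) ^ (-s) = 2⁻¹ := by
      rw [← Real.rpow_add (by norm_num : (0:ℝ) < 2), show s - 1 + -s = -1 by ring,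
        Real.rpow_neg_one]
    have hprod : (2:ℝ) ^ (s - 1) * ((1/2:ℝ)^s * 2) = 1 := by
      rw [hhalf, ← Real.rpow_neg (by norm_num : (0:ℝ) ≤ 2), ← mul_assoc, e1]
      norm_num
    have := mul_le_mul_of_nonneg_left hmono h2s.le
    calc (2:ℝ) ^ (s-1) * f ((a+b)/2)
        ≤ (2:ℝ)^(s-1) * ((1/2:ℝ)^s * ((b-a)⁻¹ * I) + (1/2:ℝ)^s * ((b-a)⁻¹ * I)) := this
      _ = ((2:ℝ)^(s-1) * ((1/2:ℝ)^s * 2)) * ((b-a)⁻¹ * I) := by ring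
      _ = (1/(b-a)) * I := by rw [hprod, one_div]; ring
  · -- right inequality
    have hmono : ∫ l in (0:ℝ)..1, f ((b - a) * l + a)
        ≤ ∫ l in (0:ℝ)..1, (l ^ s * f b + (1 - l) ^ s * f a) := by
      apply integral_mono_on (by norm_num) hint1 hintr
      intro l hl
      have := hsc b hb a ha l hl
      have heq : l * b + (1 - l) * a = (b - a) * l + a := by ring
      rw [heq] at this
      exact this
    have hr1 : ∫ l in (0:ℝ)..1, l ^ s = 1 / (s + 1) := by
      rw [integral_rpow (Or.inl (by linarith))]
      rw [Real.one_rpow, Real.zero_rpow (by linarith)]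
      norm_num
    have hr2 : ∫ l in (0:ℝ)..1, (1 - l) ^ s = 1 / (s + 1) := by
      rw [show (fun l : ℝ => (1 - l) ^ s) = fun l : ℝ => (fun x : ℝ => x ^ s) (1 - l) from rfl]
      rw [intervalIntegral.integral_comp_sub_left (fun x : ℝ => x ^ s) 1]
      norm_num [hr1]
    have hint_l : IntervalIntegrable (fun l : ℝ => l ^ s) volume 0 1 :=
      (hrpow.continuousOn).intervalIntegrable
    have hint_1l : IntervalIntegrable (fun l : ℝ => (1 - l) ^ s) volume 0 1 := by
      apply ContinuousOn.intervalIntegrable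
      exact (hrpow.comp (by fun_prop : Continuous fun l : ℝ => 1 - l)).continuousOn
    rw [h1] at hmono
    rw [intervalIntegral.integral_add (hint_l.mul_const _) (hint_1l.mul_const _),
        intervalIntegral.integral_mul_const, intervalIntegral.integral_mul_const,
        hr1, hr2] at hmono
    calc (1/(b-a)) * I = (b-a)⁻¹ * I := by rw [one_div]
      _ ≤ 1/(s+1) * f b + 1/(s+1) * f a := hmono
      _ = (f a + f b)/(s+1) := by ring
end

section
/- Let s ∈ (0,1), a < b with a,b ≥ 0, f twice continuously differentiable with |f''| s-convex in the second sense on [a,b]. Set M(s) = 1/(s+3), N(s) = 1/(s+1) − 2/(s+2) + 1/(s+3). Then |(1/(b−a)) ∫_a^b f(t) dt − f((a+b)/2)| ≤ ((b−a)²/8)·[ 2 M(s) |f''((a+b)/2)| + N(s)(|f''(a)| + |f''(b)|) ] ≤ ((b−a)²/8)·(2^{1−s} M(s) + N(s))·(|f''(a)| + |f''(b)|). -/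
/-!
Integrating by parts twice on each half of `[a, b]` writes the midpoint error
`∫ f - (b - a) f(m)`, `m = (a + b) / 2`, as `((b - a) / 2)³ / 2` times the sum of the kernel
integrals `∫₀¹ x² f''(x m + (1 - x) e)` for `e = a, b`. On the segment from `e` to `m`, the
`s`-convexity of `|f''|` bounds these by the Beta integrals `∫₀¹ x^(s+2) = 1/(s+3)` and
`∫₀¹ x² (1 - x)^s = 1/(s+1) - 2/(s+2) + 1/(s+3)`. Finally
`|f''(m)| ≤ 2^(-s) (|f''(a)| + |f''(b)|)`, by `s`-convexity at `l = 1/2`.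
-/

open intervalIntegral MeasureTheory Real Set

section UnitIntegrals

variable {s : ℝ}

lemma integral_unit_pow_mul_rpow (n : ℕ) (hs : -1 < s) :
    ∫ x in (0:ℝ)..1, x ^ n * x ^ s = 1 / (s + n + 1) := by
  have hsn : -1 < s + n := by have := n.cast_nonneg (α := ℝ); linarith
  calc ∫ x in (0:ℝ)..1, x ^ n * x ^ s = ∫ x in (0:ℝ)..1, x ^ (s + n) := by
        refine integral_congr_ae (ae_of_all _ fun x hx => ?_)
        rw [uIoc_of_le zero_le_one] at hx
        rw [rpow_add_natCast hx.1.ne', mul_comm]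
    _ = 1 / (s + n + 1) := by
        rw [integral_rpow (Or.inl hsn), one_rpow, zero_rpow (by linarith), sub_zero]

lemma integral_unit_sq_mul_one_sub_rpow (hs : -1 < s) :
    ∫ x in (0:ℝ)..1, x ^ 2 * (1 - x) ^ s = 1 / (s + 1) - 2 / (s + 2) + 1 / (s + 3) := by
  have hint : ∀ n : ℕ, IntervalIntegrable (fun x : ℝ => x ^ n * x ^ s) volume 0 1 := fun n =>
    (intervalIntegrable_rpow' hs).continuousOn_mul (continuous_pow n).continuousOn
  calc ∫ x in (0:ℝ)..1, x ^ 2 * (1 - x) ^ s = ∫ x in (0:ℝ)..1, (1 - x) ^ 2 * x ^ s := by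
        simpa using integral_comp_sub_left (a := 0) (b := 1) (fun x : ℝ => (1 - x) ^ 2 * x ^ s) 1
    _ = ∫ x in (0:ℝ)..1, (x ^ 0 * x ^ s - 2 * (x ^ 1 * x ^ s)) + x ^ 2 * x ^ s := by
        congr 1; ext x; ring
    _ = 1 / (s + 1) - 2 / (s + 2) + 1 / (s + 3) := by
        rw [integral_add ((hint 0).sub ((hint 1).const_mul 2)) (hint 2),
          integral_sub (hint 0) ((hint 1).const_mul 2), intervalIntegral.integral_const_mul,
          integral_unit_pow_mul_rpow 0 hs, integral_unit_pow_mul_rpow 1 hs,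
          integral_unit_pow_mul_rpow 2 hs]
        push_cast; ring_nf

end UnitIntegrals

section SecondDerivKernel

variable {f f' f'' : ℝ → ℝ} {e m : ℝ}

lemma integral_sub_sq_half_mul_of_hasDerivAt
    (hf : ∀ x ∈ uIcc e m, HasDerivAt f (f' x) x)
    (hf' : ∀ x ∈ uIcc e m, HasDerivAt f' (f'' x) x)
    (hf'' : IntervalIntegrable f'' volume e m) :
    ∫ t in e..m, (t - e) ^ 2 / 2 * f'' t
      = (m - e) ^ 2 / 2 * f' m - (m - e) * f m + ∫ t in e..m, f t := by
  have hf'_int : IntervalIntegrable f' volume e m :=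
    ContinuousOn.intervalIntegrable fun x hx => (hf' x hx).continuousAt.continuousWithinAt
  have hsq : ∀ x ∈ uIcc e m, HasDerivAt (fun t => (t - e) ^ 2 / 2) (x - e) x := fun x _ => by
    simpa using (((hasDerivAt_id x).sub_const e).pow 2).div_const 2
  have hlin : ∀ x ∈ uIcc e m, HasDerivAt (fun t => t - e) 1 x := fun x _ =>
    (hasDerivAt_id x).sub_const e
  rw [integral_mul_deriv_eq_deriv_mul hsq hf' ((continuous_sub_right e).intervalIntegrable _ _)
      hf'',
    integral_mul_deriv_eq_deriv_mul hlin hf intervalIntegrable_const hf'_int]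
  simp only [sub_self, ne_eq, OfNat.ofNat_ne_zero, not_false_eq_true, zero_pow, zero_div,
    zero_mul, sub_zero, one_mul]
  ring

lemma integral_sub_sq_half_mul_eq_unit (g : ℝ → ℝ) :
    (m - e) ^ 3 / 2 * ∫ x in (0:ℝ)..1, x ^ 2 * g (x * m + (1 - x) * e)
      = ∫ t in e..m, (t - e) ^ 2 / 2 * g t := by
  have := smul_integral_comp_mul_add (a := 0) (b := 1) (fun t => (t - e) ^ 2 / 2 * g t) (m - e) e
  simp only [mul_zero, zero_add, mul_one, sub_add_cancel, smul_eq_mul] at this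
  rw [← this, ← intervalIntegral.integral_const_mul, ← intervalIntegral.integral_const_mul]
  refine integral_congr fun x _ => ?_
  rw [show (m - e) * x + e = x * m + (1 - x) * e by ring]
  ring

end SecondDerivKernel

lemma abs_integral_unit_sq_mul_le {g : ℝ → ℝ} {s u v : ℝ} (hs : -1 < s)
    (hg : ∀ x ∈ Icc (0:ℝ) 1,
      |g (x * u + (1 - x) * v)| ≤ x ^ s * |g u| + (1 - x) ^ s * |g v|) :
    |∫ x in (0:ℝ)..1, x ^ 2 * g (x * u + (1 - x) * v)|
      ≤ 1 / (s + 3) * |g u| + (1 / (s + 1) - 2 / (s + 2) + 1 / (s + 3)) * |g v| := by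
  have hint_u : IntervalIntegrable (fun x : ℝ => x ^ 2 * x ^ s) volume 0 1 :=
    (intervalIntegrable_rpow' hs).continuousOn_mul (continuous_pow 2).continuousOn
  have hint_v : IntervalIntegrable (fun x : ℝ => x ^ 2 * (1 - x) ^ s) volume 0 1 := by
    have := (intervalIntegrable_rpow' hs (a := 1) (b := 0)).comp_sub_left 1
    simp only [sub_self, sub_zero] at this
    exact this.continuousOn_mul (continuous_pow 2).continuousOn
  calc |∫ x in (0:ℝ)..1, x ^ 2 * g (x * u + (1 - x) * v)|
      ≤ ∫ x in (0:ℝ)..1, (x ^ 2 * x ^ s) * |g u| + (x ^ 2 * (1 - x) ^ s) * |g v| := by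
        rw [← Real.norm_eq_abs]
        refine norm_integral_le_of_norm_le zero_le_one (ae_of_all _ fun x hx => ?_)
          ((hint_u.mul_const _).add (hint_v.mul_const _))
        rw [norm_mul, norm_pow, Real.norm_eq_abs, Real.norm_eq_abs, sq_abs]
        have := mul_le_mul_of_nonneg_left (hg x (Ioc_subset_Icc_self hx)) (sq_nonneg x)
        linarith
    _ = 1 / (s + 3) * |g u| + (1 / (s + 1) - 2 / (s + 2) + 1 / (s + 3)) * |g v| := by
        rw [integral_add (hint_u.mul_const _) (hint_v.mul_const _),
          intervalIntegral.integral_mul_const, intervalIntegral.integral_mul_const,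
          integral_unit_pow_mul_rpow 2 hs, integral_unit_sq_mul_one_sub_rpow hs]
        norm_num [add_assoc]

theorem integral_sub_mul_midpoint_eq {f f' f'' : ℝ → ℝ} {a b : ℝ}
    (hf : ∀ x ∈ uIcc a b, HasDerivAt f (f' x) x)
    (hf' : ∀ x ∈ uIcc a b, HasDerivAt f' (f'' x) x)
    (hf'' : IntervalIntegrable f'' volume a b) :
    (∫ t in a..b, f t) - (b - a) * f ((a + b) / 2)
      = ((b - a) / 2) ^ 3 / 2 *
          ((∫ x in (0:ℝ)..1, x ^ 2 * f'' (x * ((a + b) / 2) + (1 - x) * a))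
            + ∫ x in (0:ℝ)..1, x ^ 2 * f'' (x * ((a + b) / 2) + (1 - x) * b)) := by
  have hm : (a + b) / 2 ∈ uIcc a b := by
    rcases le_total a b with h | h
    · exact mem_uIcc.mpr (Or.inl ⟨by linarith, by linarith⟩)
    · exact mem_uIcc.mpr (Or.inr ⟨by linarith, by linarith⟩)
  set m := (a + b) / 2
  have hleft : uIcc a m ⊆ uIcc a b := uIcc_subset_uIcc left_mem_uIcc hm
  have hright : uIcc b m ⊆ uIcc a b := uIcc_subset_uIcc right_mem_uIcc hm
  have hf_int : ∀ {p q}, uIcc p q ⊆ uIcc a b → IntervalIntegrable f volume p q := fun h =>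
    ContinuousOn.intervalIntegrable fun x hx => (hf x (h hx)).continuousAt.continuousWithinAt
  have hKa := (integral_sub_sq_half_mul_eq_unit f'').trans (integral_sub_sq_half_mul_of_hasDerivAt
    (fun x hx => hf x (hleft hx)) (fun x hx => hf' x (hleft hx)) (hf''.mono_set hleft))
  have hKb := (integral_sub_sq_half_mul_eq_unit f'').trans (integral_sub_sq_half_mul_of_hasDerivAt
    (fun x hx => hf x (hright hx)) (fun x hx => hf' x (hright hx)) (hf''.mono_set hright))
  rw [integral_symm m b] at hKb
  rw [← integral_add_adjacent_intervals (hf_int hleft) (hf_int (uIcc_comm m b ▸ hright))]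
  linear_combination hKb - hKa

theorem ContDiffOn.integral_sub_mul_midpoint_eq {f : ℝ → ℝ} {U : Set ℝ} {a b : ℝ}
    (hf : ContDiffOn ℝ 2 f U) (hU : IsOpen U) (hsub : uIcc a b ⊆ U) :
    (∫ t in a..b, f t) - (b - a) * f ((a + b) / 2)
      = ((b - a) / 2) ^ 3 / 2 *
          ((∫ x in (0:ℝ)..1, x ^ 2 * deriv (deriv f) (x * ((a + b) / 2) + (1 - x) * a))
            + ∫ x in (0:ℝ)..1, x ^ 2 * deriv (deriv f) (x * ((a + b) / 2) + (1 - x) * b)) := by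
  have hf' : ContDiffOn ℝ 1 (deriv f) U := hf.deriv_of_isOpen hU (by norm_num)
  refine _root_.integral_sub_mul_midpoint_eq (f' := deriv f) (fun x hx => ?_) (fun x hx => ?_)
    ((hf'.continuousOn_deriv_of_isOpen hU le_rfl).mono hsub).intervalIntegrable
  · exact ((hf.differentiableOn two_ne_zero).differentiableAt
      (hU.mem_nhds (hsub hx))).hasDerivAt
  · exact ((hf'.differentiableOn one_ne_zero).differentiableAt
      (hU.mem_nhds (hsub hx))).hasDerivAt

lemma two_mul_le_two_rpow_one_sub_mul_add {s y A B : ℝ}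
    (h : y ≤ (1 / 2) ^ s * A + (1 / 2) ^ s * B) : 2 * y ≤ (2:ℝ) ^ (1 - s) * (A + B) := by
  have h2 : (2:ℝ) ^ (1 - s) = 2 * (1 / 2) ^ s := by
    rw [rpow_sub two_pos, rpow_one, one_div, inv_rpow zero_le_two, div_eq_mul_inv]
  rw [h2]
  linarith

theorem stmt_16_general (f : ℝ → ℝ) (a b : ℝ) (s : ℝ) (hs : s ∈ Set.Ioo (0:ℝ) 1)
    (hab : a < b)
    (U : Set ℝ) (hU : IsOpen U) (hsub : Set.Icc a b ⊆ U) (hf : ContDiffOn ℝ 2 f U)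
    (hsc : ∀ u ∈ Set.Icc a b, ∀ v ∈ Set.Icc a b, ∀ l ∈ Set.Icc (0:ℝ) 1,
      |deriv (deriv f) (l*u + (1-l)*v)| ≤
        l ^ s * |deriv (deriv f) u| + (1-l) ^ s * |deriv (deriv f) v|) :
    |(1/(b-a)) * (∫ t in a..b, f t) - f ((a+b)/2)|
      ≤ ((b-a)^2/8) * (2 * (1/(s+3)) * |deriv (deriv f) ((a+b)/2)|
          + (1/(s+1) - 2/(s+2) + 1/(s+3)) * (|deriv (deriv f) a| + |deriv (deriv f) b|)) ∧
    ((b-a)^2/8) * (2 * (1/(s+3)) * |deriv (deriv f) ((a+b)/2)|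
          + (1/(s+1) - 2/(s+2) + 1/(s+3)) * (|deriv (deriv f) a| + |deriv (deriv f) b|))
      ≤ ((b-a)^2/8) * ((2:ℝ) ^ (1-s) * (1/(s+3)) + (1/(s+1) - 2/(s+2) + 1/(s+3)))
          * (|deriv (deriv f) a| + |deriv (deriv f) b|) := by
  obtain ⟨hs0, -⟩ := hs
  have hmI : (a + b) / 2 ∈ Icc a b := ⟨by linarith, by linarith⟩
  have haI : a ∈ Icc a b := left_mem_Icc.mpr hab.le
  have hbI : b ∈ Icc a b := right_mem_Icc.mpr hab.le
  have hid := hf.integral_sub_mul_midpoint_eq hU ((uIcc_of_le hab.le).trans_subset hsub)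
  have hKa := abs_integral_unit_sq_mul_le (by linarith) fun x hx => hsc _ hmI a haI x hx
  have hKb := abs_integral_unit_sq_mul_le (by linarith) fun x hx => hsc _ hmI b hbI x hx
  have hmid := hsc a haI b hbI (1 / 2) ⟨by norm_num, by norm_num⟩
  rw [show (1:ℝ) - 1 / 2 = 1 / 2 by norm_num, show 1 / 2 * a + 1 / 2 * b = (a + b) / 2 by ring]
    at hmid
  set g := deriv (deriv f)
  set X := 2 * (1 / (s + 3)) * |g ((a + b) / 2)|
    + (1 / (s + 1) - 2 / (s + 2) + 1 / (s + 3)) * (|g a| + |g b|) with hX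
  set Ka := ∫ x in (0:ℝ)..1, x ^ 2 * g (x * ((a + b) / 2) + (1 - x) * a)
  set Kb := ∫ x in (0:ℝ)..1, x ^ 2 * g (x * ((a + b) / 2) + (1 - x) * b)
  have hKX : |Ka + Kb| ≤ X := (abs_add_le _ _).trans (by linarith)
  constructor
  · calc |1 / (b - a) * (∫ t in a..b, f t) - f ((a + b) / 2)|
          = (b - a) ^ 2 / 16 * |Ka + Kb| := by
          rw [← abs_of_nonneg (by positivity : (0:ℝ) ≤ (b - a) ^ 2 / 16), ← abs_mul]
          congr 1
          field_simp [(sub_pos.mpr hab).ne']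
          linear_combination 16 * hid
      _ ≤ (b - a) ^ 2 / 16 * X := by gcongr
      _ ≤ (b - a) ^ 2 / 8 * X := by gcongr; exacts [(abs_nonneg _).trans hKX, by norm_num]
  · have hM : 0 < 1 / (s + 3) := by positivity
    have hmid' := mul_le_mul_of_nonneg_right (two_mul_le_two_rpow_one_sub_mul_add hmid) hM.le
    calc (b - a) ^ 2 / 8 * X
        ≤ (b - a) ^ 2 / 8 * ((2:ℝ) ^ (1 - s) * (|g a| + |g b|) * (1 / (s + 3))
            + (1 / (s + 1) - 2 / (s + 2) + 1 / (s + 3)) * (|g a| + |g b|)) := by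
          rw [hX]; gcongr _ * (?_ + _); linarith
      _ = _ := by ring

theorem stmt_16 (f : ℝ → ℝ) (a b : ℝ) (s : ℝ) (hs : s ∈ Set.Ioo (0:ℝ) 1)
    (ha : 0 ≤ a) (hb : 0 ≤ b) (hab : a < b)
    (U : Set ℝ) (hU : IsOpen U) (hsub : Set.Icc a b ⊆ U) (hf : ContDiffOn ℝ 2 f U)
    (hsc : ∀ u ∈ Set.Icc a b, ∀ v ∈ Set.Icc a b, ∀ l ∈ Set.Icc (0:ℝ) 1,
      |deriv (deriv f) (l*u + (1-l)*v)| ≤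
        l ^ s * |deriv (deriv f) u| + (1-l) ^ s * |deriv (deriv f) v|) :
    |(1/(b-a)) * (∫ t in a..b, f t) - f ((a+b)/2)|
      ≤ ((b-a)^2/8) * (2 * (1/(s+3)) * |deriv (deriv f) ((a+b)/2)|
          + (1/(s+1) - 2/(s+2) + 1/(s+3)) * (|deriv (deriv f) a| + |deriv (deriv f) b|)) ∧
    ((b-a)^2/8) * (2 * (1/(s+3)) * |deriv (deriv f) ((a+b)/2)|
          + (1/(s+1) - 2/(s+2) + 1/(s+3)) * (|deriv (deriv f) a| + |deriv (deriv f) b|))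
      ≤ ((b-a)^2/8) * ((2:ℝ) ^ (1-s) * (1/(s+3)) + (1/(s+1) - 2/(s+2) + 1/(s+3)))
          * (|deriv (deriv f) a| + |deriv (deriv f) b|) :=
  stmt_16_general f a b s hs hab U hU hsub hf hsc
end
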